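/- arXiv:1901.03087 — 6 statements merged into one kernel-verified Lean document; each statement's English description precedes it below -/
import Mathlib

section
/- Let 𝔞 = (𝔞₀, 𝔞₁) be a Lie antialgebra over a field k of characteristic 0, and let (α, β) be an algebra endomorphism of 𝔞, i.e. linear maps α : 𝔞₀ → 𝔞₀ and β : 𝔞₁ → 𝔞₁ with α(x₁·x₂) = α(x₁)·α(x₂), β(x₁·y₁) = α(x₁)·β(y₁), and α([y₁,y₂]) = [β(y₁), β(y₂)] for all x₁,x₂ ∈ 𝔞₀, y₁,y₂ ∈ 𝔞₁. Then the twisted operations x₁ ·_α x₂ := α(x₁·x₂), x₁ ·_β y₁ := β(x₁·y₁), [y₁,y₂]_α := α([y₁,y₂]), together with the maps α and β, make (𝔞₀, 𝔞₁) into a Hom-Lie antialgebra, i.e. axioms (HA1)–(HA4) hold for the twisted operations. -/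
/-- Twisting a Lie antialgebra by an algebra endomorphism `(α, β)` yields a
Hom-Lie antialgebra: the twisted operations satisfy the axioms (HA1)-(HA4). -/
theorem twisted_lieAntialgebra_is_homLieAntialgebra
    (k : Type*) [Field k] [CharZero k]
    (A0 A1 : Type*) [AddCommGroup A0] [Module k A0] [AddCommGroup A1] [Module k A1]
    (m0 : A0 →ₗ[k] A0 →ₗ[k] A0) (m1 : A0 →ₗ[k] A1 →ₗ[k] A1) (br : A1 →ₗ[k] A1 →ₗ[k] A0)
    (hm0comm : ∀ x1 x2, m0 x1 x2 = m0 x2 x1)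
    (hbranti : ∀ y1 y2, br y1 y2 = - br y2 y1)
    (la1 : ∀ x1 x2 x3, m0 x1 (m0 x2 x3) = m0 (m0 x1 x2) x3)
    (la2 : ∀ x1 x2 y1, m1 x1 (m1 x2 y1) = ((1:k)/2) • m1 (m0 x1 x2) y1)
    (la3 : ∀ x1 y1 y2, m0 x1 (br y1 y2) = br (m1 x1 y1) y2 + br y1 (m1 x1 y2))
    (la4 : ∀ y1 y2 y3, m1 (br y2 y3) y1 + m1 (br y3 y1) y2 + m1 (br y1 y2) y3 = 0)
    (α : A0 →ₗ[k] A0) (β : A1 →ₗ[k] A1)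
    (hα : ∀ x1 x2, α (m0 x1 x2) = m0 (α x1) (α x2))
    (hβ : ∀ x1 y1, β (m1 x1 y1) = m1 (α x1) (β y1))
    (hbr : ∀ y1 y2, α (br y1 y2) = br (β y1) (β y2)) :
    -- (HA1) for the twisted operations
    (∀ x1 x2 x3, α (m0 (α x1) (α (m0 x2 x3))) = α (m0 (α (m0 x1 x2)) (α x3))) ∧
    -- (HA2) for the twisted operations
    (∀ x1 x2 y1, β (m1 (α x1) (β (m1 x2 y1))) = ((1:k)/2) • β (m1 (α (m0 x1 x2)) (β y1))) ∧
    -- (HA3) for the twisted operations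
    (∀ x1 y1 y2, α (m0 (α x1) (α (br y1 y2))) =
      α (br (β (m1 x1 y1)) (β y2)) + α (br (β y1) (β (m1 x1 y2)))) ∧
    -- (HA4) for the twisted operations
    (∀ y1 y2 y3, β (m1 (α (br y2 y3)) (β y1)) + β (m1 (α (br y3 y1)) (β y2))
      + β (m1 (α (br y1 y2)) (β y3)) = 0) := by
  refine ⟨fun x1 x2 x3 => ?_, fun x1 x2 y1 => ?_, fun x1 y1 y2 => ?_, fun y1 y2 y3 => ?_⟩
  · rw [← hα, ← hα, la1]
  · rw [← hβ, ← hβ, la2, map_smul, map_smul]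
  · rw [← hα, ← hbr, ← hbr, ← map_add, la3, map_add]
  · simp only [← hβ, ← map_add, la4, map_zero]
end

section
/- Let 𝔞 = (𝔞₀, 𝔞₁) be a Lie antialgebra over a field k of characteristic 0, and let (α, β) be an algebra endomorphism of 𝔞 (α(x₁·x₂) = α(x₁)·α(x₂), β(x₁·y₁) = α(x₁)·β(y₁), α([y₁,y₂]) = [β(y₁), β(y₂)]). Define the twisted operations x₁ ·_α x₂ := α(x₁·x₂) and x₁ ·_β y₁ := β(x₁·y₁). Then for all x₁, x₂ ∈ 𝔞₀ and y₁ ∈ 𝔞₁ one has α(x₁) ·_β (x₂ ·_β y₁) = (1/2)(x₁ ·_α x₂) ·_β β(y₁). -/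
/-- For a Lie antialgebra twisted by an algebra endomorphism `(α, β)`,
the axiom (HA2) holds for the twisted operations. -/
theorem twisted_lieAntialgebra_ha2
    (k : Type*) [Field k] [CharZero k]
    (A0 A1 : Type*) [AddCommGroup A0] [Module k A0] [AddCommGroup A1] [Module k A1]
    (m0 : A0 →ₗ[k] A0 →ₗ[k] A0) (m1 : A0 →ₗ[k] A1 →ₗ[k] A1) (br : A1 →ₗ[k] A1 →ₗ[k] A0)
    (hm0comm : ∀ x1 x2, m0 x1 x2 = m0 x2 x1)
    (hbranti : ∀ y1 y2, br y1 y2 = - br y2 y1)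
    (la1 : ∀ x1 x2 x3, m0 x1 (m0 x2 x3) = m0 (m0 x1 x2) x3)
    (la2 : ∀ x1 x2 y1, m1 x1 (m1 x2 y1) = ((1:k)/2) • m1 (m0 x1 x2) y1)
    (la3 : ∀ x1 y1 y2, m0 x1 (br y1 y2) = br (m1 x1 y1) y2 + br y1 (m1 x1 y2))
    (la4 : ∀ y1 y2 y3, m1 (br y2 y3) y1 + m1 (br y3 y1) y2 + m1 (br y1 y2) y3 = 0)
    (α : A0 →ₗ[k] A0) (β : A1 →ₗ[k] A1)
    (hα : ∀ x1 x2, α (m0 x1 x2) = m0 (α x1) (α x2))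
    (hβ : ∀ x1 y1, β (m1 x1 y1) = m1 (α x1) (β y1))
    (hbr : ∀ y1 y2, α (br y1 y2) = br (β y1) (β y2)) :
    ∀ x1 x2 y1, β (m1 (α x1) (β (m1 x2 y1))) = ((1:k)/2) • β (m1 (α (m0 x1 x2)) (β y1)) := by
  intro x1 x2 y1
  rw [hβ x2 y1, la2, map_smul, ← hα, ← hβ, hβ]
end

section
/- Let 𝔞 = (𝔞₀, 𝔞₁) be a Lie antialgebra over a field k of characteristic 0, and let (α, β) be an algebra endomorphism of 𝔞 (α(x₁·x₂) = α(x₁)·α(x₂), β(x₁·y₁) = α(x₁)·β(y₁), α([y₁,y₂]) = [β(y₁), β(y₂)]). Define the twisted operations x₁ ·_α x₂ := α(x₁·x₂), x₁ ·_β y₁ := β(x₁·y₁), and [y₁,y₂]_α := α([y₁,y₂]). Then for all x₁ ∈ 𝔞₀ and y₁, y₂ ∈ 𝔞₁ one has α(x₁) ·_α [y₁,y₂]_α = [x₁ ·_β y₁, β(y₂)]_α + [β(y₁), x₁ ·_β y₂]_α. -/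
/-- For a Lie antialgebra twisted by an algebra endomorphism `(α, β)`,
the axiom (HA3) holds for the twisted operations. -/
theorem twisted_lieAntialgebra_ha3
    (k : Type*) [Field k] [CharZero k]
    (A0 A1 : Type*) [AddCommGroup A0] [Module k A0] [AddCommGroup A1] [Module k A1]
    (m0 : A0 →ₗ[k] A0 →ₗ[k] A0) (m1 : A0 →ₗ[k] A1 →ₗ[k] A1) (br : A1 →ₗ[k] A1 →ₗ[k] A0)
    (hm0comm : ∀ x1 x2, m0 x1 x2 = m0 x2 x1)
    (hbranti : ∀ y1 y2, br y1 y2 = - br y2 y1)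
    (la1 : ∀ x1 x2 x3, m0 x1 (m0 x2 x3) = m0 (m0 x1 x2) x3)
    (la2 : ∀ x1 x2 y1, m1 x1 (m1 x2 y1) = ((1:k)/2) • m1 (m0 x1 x2) y1)
    (la3 : ∀ x1 y1 y2, m0 x1 (br y1 y2) = br (m1 x1 y1) y2 + br y1 (m1 x1 y2))
    (la4 : ∀ y1 y2 y3, m1 (br y2 y3) y1 + m1 (br y3 y1) y2 + m1 (br y1 y2) y3 = 0)
    (α : A0 →ₗ[k] A0) (β : A1 →ₗ[k] A1)
    (hα : ∀ x1 x2, α (m0 x1 x2) = m0 (α x1) (α x2))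
    (hβ : ∀ x1 y1, β (m1 x1 y1) = m1 (α x1) (β y1))
    (hbr : ∀ y1 y2, α (br y1 y2) = br (β y1) (β y2)) :
    ∀ x1 y1 y2, α (m0 (α x1) (α (br y1 y2))) =
      α (br (β (m1 x1 y1)) (β y2)) + α (br (β y1) (β (m1 x1 y2))) := by
  intro x1 y1 y2
  rw [hbr, la3, map_add, ← hβ, ← hβ]
end

section
/- Let k be a field of characteristic 0 and μ ∈ k with μ ≠ 0. Let 𝔞₀ = k (with basis element ε = 1) and 𝔞₁ = k² (with basis elements a, b). Define the bilinear operations by ε·ε = ε, ε·a = (1/2)μ a, ε·b = (1/2)μ⁻¹ b, [a,b] = (1/2)ε = −[b,a], [a,a] = [b,b] = 0, and the linear maps α = id on 𝔞₀ and β(a) = μ a, β(b) = μ⁻¹ b on 𝔞₁. Then (𝔞₀, 𝔞₁, ·, ·, [·,·], α, β) is a multiplicative Hom-Lie antialgebra. -/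
/-!
With `β = diag(μ, μ⁻¹)` and `det y z = y.1 * z.2 - y.2 * z.1`, the odd action is
`x · y = (x / 2) • β y` and the bracket is `det / 2`. The axioms then reduce to three facts:
`β` is linear, `β` has determinant `μ μ⁻¹ = 1` and so preserves `det`, and in dimension two
`det y₂ y₃ • y₁ + det y₃ y₁ • y₂ + det y₁ y₂ • y₃ = 0`, which gives (HA4) by linearity of `β`.
-/

namespace K1Twisted

section Det

variable {R : Type*} [CommRing R]

def det (y z : R × R) : R := y.1 * z.2 - y.2 * z.1

theorem det_antisymm (y z : R × R) : det y z = -det z y := by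
  unfold det; ring

theorem det_smul_left (c : R) (y z : R × R) : det (c • y) z = c * det y z := by
  simp only [det, Prod.smul_fst, Prod.smul_snd, smul_eq_mul]; ring

theorem det_smul_right (c : R) (y z : R × R) : det y (c • z) = c * det y z := by
  simp only [det, Prod.smul_fst, Prod.smul_snd, smul_eq_mul]; ring

theorem det_smul_add_det_smul_add_det_smul (y₁ y₂ y₃ : R × R) :
    det y₂ y₃ • y₁ + det y₃ y₁ • y₂ + det y₁ y₂ • y₃ = 0 := by
  ext <;> simp only [det, Prod.fst_add, Prod.snd_add, Prod.smul_fst, Prod.smul_snd,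
    smul_eq_mul, Prod.fst_zero, Prod.snd_zero] <;> ring

end Det

variable {k : Type*} [Field k] (μ : k)

def twist (y : k × k) : k × k := (μ * y.1, μ⁻¹ * y.2)

def act (x : k) (y : k × k) : k × k :=
  (((1:k)/2) * μ * x * y.1, ((1:k)/2) * μ⁻¹ * x * y.2)

def bracket (y z : k × k) : k := (1/2) * det y z

theorem bracket_eq_half_mul_det (y z : k × k) : bracket y z = (1/2) * det y z := rfl

theorem act_eq_smul_twist (x : k) (y : k × k) : act μ x y = ((1/2) * x) • twist μ y := by
  ext <;> simp only [act, twist, Prod.smul_fst, Prod.smul_snd, smul_eq_mul] <;> ring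

theorem twist_add (y z : k × k) : twist μ (y + z) = twist μ y + twist μ z := by
  ext <;> simp only [twist, Prod.fst_add, Prod.snd_add] <;> ring

theorem twist_smul (c : k) (y : k × k) : twist μ (c • y) = c • twist μ y := by
  ext <;> simp only [twist, Prod.smul_fst, Prod.smul_snd, smul_eq_mul] <;> ring

theorem twist_zero : twist μ 0 = 0 := by
  simpa using twist_smul μ 0 0

variable {μ}

theorem det_twist (hμ : μ ≠ 0) (y z : k × k) : det (twist μ y) (twist μ z) = det y z := by
  simp only [det, twist]
  field_simp

theorem bracket_antisymm (y z : k × k) : bracket y z = -bracket z y := by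
  rw [bracket_eq_half_mul_det, bracket_eq_half_mul_det, det_antisymm]; ring

theorem bracket_twist (hμ : μ ≠ 0) (y z : k × k) :
    bracket (twist μ y) (twist μ z) = bracket y z := by
  rw [bracket_eq_half_mul_det, bracket_eq_half_mul_det, det_twist hμ]

theorem act_act (x₁ x₂ : k) (y : k × k) :
    act μ x₁ (act μ x₂ y) = ((1:k)/2) • act μ (x₁ * x₂) (twist μ y) := by
  simp only [act_eq_smul_twist, twist_smul, smul_smul]
  ring_nf

theorem mul_bracket [CharZero k] (hμ : μ ≠ 0) (x : k) (y z : k × k) :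
    x * bracket y z = bracket (act μ x y) (twist μ z) + bracket (twist μ y) (act μ x z) := by
  simp only [act_eq_smul_twist, bracket_eq_half_mul_det, det_smul_left, det_smul_right,
    det_twist hμ]
  ring

theorem act_bracket_cyclic (y₁ y₂ y₃ : k × k) :
    act μ (bracket y₂ y₃) (twist μ y₁) + act μ (bracket y₃ y₁) (twist μ y₂)
      + act μ (bracket y₁ y₂) (twist μ y₃) = 0 := by
  calc _ = ((1:k)/2 * (1/2)) •
          twist μ (twist μ (det y₂ y₃ • y₁ + det y₃ y₁ • y₂ + det y₁ y₂ • y₃)) := by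
        simp only [act_eq_smul_twist, bracket_eq_half_mul_det, twist_add, twist_smul]
        module
    _ = 0 := by rw [det_smul_add_det_smul_add_det_smul, twist_zero, twist_zero, smul_zero]

theorem twist_act (x : k) (y : k × k) : twist μ (act μ x y) = act μ x (twist μ y) := by
  rw [act_eq_smul_twist, act_eq_smul_twist, twist_smul]

end K1Twisted

/-- The twisted algebra `K(1)_μ` with even part `k` (basis ε = 1), odd part
`k × k` (basis a, b), products `ε·ε = ε`, `ε·a = (1/2)μ a`, `ε·b = (1/2)μ⁻¹ b`,
bracket `[a,b] = (1/2)ε`, and structure maps `α = id`, `β(a) = μ a`, `β(b) = μ⁻¹ b`,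
is a multiplicative Hom-Lie antialgebra. -/
theorem K1_twisted_is_multiplicative_homLieAntialgebra
    (k : Type*) [Field k] [CharZero k] (μ : k) (hμ : μ ≠ 0) :
    let m0 : k → k → k := fun x1 x2 => x1 * x2
    let m1 : k → k × k → k × k :=
      fun x y => (((1:k)/2) * μ * x * y.1, ((1:k)/2) * μ⁻¹ * x * y.2)
    let br : k × k → k × k → k := fun y1 y2 => ((1:k)/2) * (y1.1 * y2.2 - y1.2 * y2.1)
    let α : k → k := id
    let β : k × k → k × k := fun y => (μ * y.1, μ⁻¹ * y.2)
    -- symmetry and antisymmetry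
    (∀ x1 x2 : k, m0 x1 x2 = m0 x2 x1) ∧
    (∀ y1 y2 : k × k, br y1 y2 = - br y2 y1) ∧
    -- (HA1)
    (∀ x1 x2 x3 : k, m0 (α x1) (m0 x2 x3) = m0 (m0 x1 x2) (α x3)) ∧
    -- (HA2)
    (∀ (x1 x2 : k) (y1 : k × k), m1 (α x1) (m1 x2 y1) = ((1:k)/2) • m1 (m0 x1 x2) (β y1)) ∧
    -- (HA3)
    (∀ (x1 : k) (y1 y2 : k × k),
      m0 (α x1) (br y1 y2) = br (m1 x1 y1) (β y2) + br (β y1) (m1 x1 y2)) ∧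
    -- (HA4)
    (∀ y1 y2 y3 : k × k,
      m1 (br y2 y3) (β y1) + m1 (br y3 y1) (β y2) + m1 (br y1 y2) (β y3) = 0) ∧
    -- multiplicativity
    (∀ x1 x2 : k, α (m0 x1 x2) = m0 (α x1) (α x2)) ∧
    (∀ (x1 : k) (y1 : k × k), β (m1 x1 y1) = m1 (α x1) (β y1)) ∧
    (∀ y1 y2 : k × k, α (br y1 y2) = br (β y1) (β y2)) :=
  ⟨mul_comm, K1Twisted.bracket_antisymm, fun x₁ x₂ x₃ => (mul_assoc x₁ x₂ x₃).symm,
    K1Twisted.act_act, K1Twisted.mul_bracket hμ, K1Twisted.act_bracket_cyclic, fun _ _ => rfl,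
    K1Twisted.twist_act, fun y z => (K1Twisted.bracket_twist hμ y z).symm⟩
end

section
/- Let (𝔞, α, β) be a multiplicative Hom-Lie antialgebra over a field k of characteristic 0 with a representation ρ = (ρ₀⁰, ρ₀¹, ρ₁⁰, ρ₁¹) on (V₀, V₁, α_V, β_V), and let ω and ω' be two 2-cocycles. Suppose φ = (φ₀, φ₁) is an equivalence between the extensions 𝔞 ⊕_ω V and 𝔞 ⊕_{ω'} V, i.e. a Hom-Lie antialgebra homomorphism from 𝔞 ⊕_ω V to 𝔞 ⊕_{ω'} V restricting to the identity on V and inducing the identity on 𝔞. Then there exist linear maps f₀ : 𝔞₀ → V₀ and f₁ : 𝔞₁ → V₁ such that φ₀(x,u) = (x, f₀(x) + u), φ₁(y,w) = (y, f₁(y) + w), and for all x₁,x₂ ∈ 𝔞₀, y₁,y₂ ∈ 𝔞₁: (ω₀ − ω₀')(x₁,x₂) = ρ₀⁰(x₁)f₀(x₂) + ρ₀⁰(x₂)f₀(x₁) − f₀(x₁·x₂), (ω₁ − ω₁')(x₁,y₁) = ρ₀¹(x₁)f₁(y₁) + ρ₁⁰(y₁)f₀(x₁) − f₁(x₁·y₁),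 and (ω₂ − ω₂')(y₁,y₂) = ρ₁¹(y₁)f₁(y₂) − ρ₁¹(y₂)f₁(y₁) − f₀([y₁,y₂]); that is, ω − ω' is a coboundary. -/
/-- A multiplicative Hom-Lie antialgebra over `k`: an even part `A0` with a symmetric
product `m0`, an odd part `A1` with an action `m1 : A0 → A1 → A1` and an antisymmetric
bracket `br : A1 → A1 → A0`, together with linear structure maps `al : A0 → A0` and
`be : A1 → A1` satisfying the axioms (HA1)-(HA4) and multiplicativity. -/
structure MHLA (k : Type*) [Field k] (A0 A1 : Type*)
    [AddCommGroup A0] [Module k A0] [AddCommGroup A1] [Module k A1] where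
  m0 : A0 →ₗ[k] A0 →ₗ[k] A0
  m1 : A0 →ₗ[k] A1 →ₗ[k] A1
  br : A1 →ₗ[k] A1 →ₗ[k] A0
  al : A0 →ₗ[k] A0
  be : A1 →ₗ[k] A1
  m0_comm : ∀ x1 x2, m0 x1 x2 = m0 x2 x1
  br_anti : ∀ y1 y2, br y1 y2 = - br y2 y1
  ha1 : ∀ x1 x2 x3, m0 (al x1) (m0 x2 x3) = m0 (m0 x1 x2) (al x3)
  ha2 : ∀ x1 x2 y1, m1 (al x1) (m1 x2 y1) = ((1:k)/2) • m1 (m0 x1 x2) (be y1)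
  ha3 : ∀ x1 y1 y2, m0 (al x1) (br y1 y2) = br (m1 x1 y1) (be y2) + br (be y1) (m1 x1 y2)
  ha4 : ∀ y1 y2 y3, m1 (br y2 y3) (be y1) + m1 (br y3 y1) (be y2) + m1 (br y1 y2) (be y3) = 0
  mul_al : ∀ x1 x2, al (m0 x1 x2) = m0 (al x1) (al x2)
  mul_be : ∀ x1 y1, be (m1 x1 y1) = m1 (al x1) (be y1)
  mul_br : ∀ y1 y2, al (br y1 y2) = br (be y1) (be y2)

variable {k : Type*} [Field k] [CharZero k]
variable {A0 A1 : Type*}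
  [AddCommGroup A0] [Module k A0] [AddCommGroup A1] [Module k A1]

/-- A representation of a multiplicative Hom-Lie antialgebra `a` on a Hom-super vector
space `(V0, V1, aV, bV)`, conditions (R1)-(R7). -/
structure HLARep (a : MHLA k A0 A1) (V0 V1 : Type*)
    [AddCommGroup V0] [Module k V0] [AddCommGroup V1] [Module k V1] where
  aV : V0 →ₗ[k] V0
  bV : V1 →ₗ[k] V1
  r00 : A0 →ₗ[k] V0 →ₗ[k] V0
  r01 : A0 →ₗ[k] V1 →ₗ[k] V1
  r10 : A1 →ₗ[k] V0 →ₗ[k] V1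
  r11 : A1 →ₗ[k] V1 →ₗ[k] V0
  R1 : ∀ x1 x2 u, r00 (a.al x1) (r00 x2 u) = r00 (a.m0 x1 x2) (aV u)
  R2 : ∀ x1 x2 w, r01 (a.al x1) (r01 x2 w) = ((1:k)/2) • r01 (a.m0 x1 x2) (bV w)
  R3 : ∀ x1 y1 u, r01 (a.al x1) (r10 y1 u) = ((1:k)/2) • r10 (a.be y1) (r00 x1 u)
  R4 : ∀ x1 y1 u, r10 (a.m1 x1 y1) (aV u) = ((1:k)/2) • r10 (a.be y1) (r00 x1 u)
  R5 : ∀ x1 y1 w, r00 (a.al x1) (r11 y1 w) = r11 (a.m1 x1 y1) (bV w) + r11 (a.be y1) (r01 x1 w)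
  R6 : ∀ y1 y2 u, r00 (a.br y1 y2) (aV u) = r11 (a.be y1) (r10 y2 u) - r11 (a.be y2) (r10 y1 u)
  R7 : ∀ y1 y2 w, r01 (a.br y1 y2) (bV w) = r10 (a.be y1) (r11 y2 w) - r10 (a.be y2) (r11 y1 w)

/-- A 2-cocycle of the multiplicative Hom-Lie antialgebra `a` with values in the
representation `ρ`: a triple of bilinear maps compatible with the structure maps and
satisfying the cocycle identities (C1)-(C4). -/
structure Cocycle2 (a : MHLA k A0 A1) {V0 V1 : Type*}
    [AddCommGroup V0] [Module k V0] [AddCommGroup V1] [Module k V1]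
    (ρ : HLARep a V0 V1) where
  w0 : A0 →ₗ[k] A0 →ₗ[k] V0
  w1 : A0 →ₗ[k] A1 →ₗ[k] V1
  w2 : A1 →ₗ[k] A1 →ₗ[k] V0
  w0_comm : ∀ x1 x2, w0 x1 x2 = w0 x2 x1
  w2_anti : ∀ y1 y2, w2 y1 y2 = - w2 y2 y1
  cmp0 : ∀ x1 x2, ρ.aV (w0 x1 x2) = w0 (a.al x1) (a.al x2)
  cmp1 : ∀ x1 y1, ρ.bV (w1 x1 y1) = w1 (a.al x1) (a.be y1)
  cmp2 : ∀ y1 y2, ρ.aV (w2 y1 y2) = w2 (a.be y1) (a.be y2)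
  C1 : ∀ x1 x2 x3, ρ.r00 (a.al x1) (w0 x2 x3) + w0 (a.al x1) (a.m0 x2 x3)
        = ρ.r00 (a.al x3) (w0 x1 x2) + w0 (a.m0 x1 x2) (a.al x3)
  C2 : ∀ x1 x2 y1, ρ.r01 (a.al x1) (w1 x2 y1) + w1 (a.al x1) (a.m1 x2 y1)
        = ((1:k)/2) • ρ.r10 (a.be y1) (w0 x1 x2) + ((1:k)/2) • w1 (a.m0 x1 x2) (a.be y1)
  C3 : ∀ x1 y1 y2, ρ.r00 (a.al x1) (w2 y1 y2) + w0 (a.al x1) (a.br y1 y2)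
        = ρ.r11 (a.be y2) (w1 x1 y1) + w2 (a.m1 x1 y1) (a.be y2)
          + ρ.r11 (a.be y1) (w1 x1 y2) + w2 (a.be y1) (a.m1 x1 y2)
  C4 : ∀ y1 y2 y3, ρ.r10 (a.be y1) (w2 y2 y3) + w1 (a.br y2 y3) (a.be y1)
        + ρ.r10 (a.be y2) (w2 y3 y1) + w1 (a.br y3 y1) (a.be y2)
        + ρ.r10 (a.be y3) (w2 y1 y2) + w1 (a.br y1 y2) (a.be y3) = 0

variable {V0 V1 : Type*} [AddCommGroup V0] [Module k V0] [AddCommGroup V1] [Module k V1]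

/-- Structure map on the even part of the extension `𝔞 ⊕_ω V`. -/
def eAl (a : MHLA k A0 A1) (ρ : HLARep a V0 V1) : A0 × V0 → A0 × V0 :=
  fun p => (a.al p.1, ρ.aV p.2)

/-- Structure map on the odd part of the extension `𝔞 ⊕_ω V`. -/
def eBe (a : MHLA k A0 A1) (ρ : HLARep a V0 V1) : A1 × V1 → A1 × V1 :=
  fun q => (a.be q.1, ρ.bV q.2)

/-- Even product of the extension `𝔞 ⊕_ω V`. -/
def eM0 (a : MHLA k A0 A1) (ρ : HLARep a V0 V1) (c : Cocycle2 a ρ) :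
    A0 × V0 → A0 × V0 → A0 × V0 :=
  fun p q => (a.m0 p.1 q.1, ρ.r00 p.1 q.2 + ρ.r00 q.1 p.2 + c.w0 p.1 q.1)

/-- Even-odd product of the extension `𝔞 ⊕_ω V`. -/
def eM1 (a : MHLA k A0 A1) (ρ : HLARep a V0 V1) (c : Cocycle2 a ρ) :
    A0 × V0 → A1 × V1 → A1 × V1 :=
  fun p q => (a.m1 p.1 q.1, ρ.r01 p.1 q.2 + ρ.r10 q.1 p.2 + c.w1 p.1 q.1)

/-- Bracket of the extension `𝔞 ⊕_ω V`. -/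
def eBr (a : MHLA k A0 A1) (ρ : HLARep a V0 V1) (c : Cocycle2 a ρ) :
    A1 × V1 → A1 × V1 → A0 × V0 :=
  fun p q => (a.br p.1 q.1, ρ.r11 p.1 q.2 - ρ.r11 q.1 p.2 + c.w2 p.1 q.1)

/-- if `φ = (φ₀, φ₁)` is an equivalence between the abelian extensions
`𝔞 ⊕_ω V` and `𝔞 ⊕_ω' V` (a homomorphism of Hom-Lie antialgebras restricting to the
identity on `V` and inducing the identity on `𝔞`), then there are linear maps
`f₀ : 𝔞₀ → V₀`, `f₁ : 𝔞₁ → V₁` with `φ₀(x,u) = (x, f₀(x)+u)`, `φ₁(y,w) = (y, f₁(y)+w)`,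
and `ω − ω'` is the coboundary of `(f₀, f₁)`. -/
theorem equivalent_extensions_cohomologous
    (a : MHLA k A0 A1) (ρ : HLARep a V0 V1) (c c' : Cocycle2 a ρ)
    (φ0 : (A0 × V0) →ₗ[k] (A0 × V0)) (φ1 : (A1 × V1) →ₗ[k] (A1 × V1))
    -- φ restricts to the identity on V
    (hV0 : ∀ u : V0, φ0 (0, u) = (0, u))
    (hV1 : ∀ w : V1, φ1 (0, w) = (0, w))
    -- φ induces the identity on 𝔞
    (hA0 : ∀ p : A0 × V0, (φ0 p).1 = p.1)
    (hA1 : ∀ q : A1 × V1, (φ1 q).1 = q.1)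
    -- φ commutes with the structure maps
    (hal : ∀ p, φ0 (eAl a ρ p) = eAl a ρ (φ0 p))
    (hbe : ∀ q, φ1 (eBe a ρ q) = eBe a ρ (φ1 q))
    -- φ is a homomorphism from 𝔞 ⊕_ω V to 𝔞 ⊕_ω' V
    (hm0 : ∀ p q, φ0 (eM0 a ρ c p q) = eM0 a ρ c' (φ0 p) (φ0 q))
    (hm1 : ∀ p s, φ1 (eM1 a ρ c p s) = eM1 a ρ c' (φ0 p) (φ1 s))
    (hbr : ∀ s t, φ0 (eBr a ρ c s t) = eBr a ρ c' (φ1 s) (φ1 t)) :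
    ∃ (f0 : A0 →ₗ[k] V0) (f1 : A1 →ₗ[k] V1),
      (∀ x u, φ0 (x, u) = (x, f0 x + u)) ∧
      (∀ y w, φ1 (y, w) = (y, f1 y + w)) ∧
      (∀ x1 x2, c.w0 x1 x2 - c'.w0 x1 x2
        = ρ.r00 x1 (f0 x2) + ρ.r00 x2 (f0 x1) - f0 (a.m0 x1 x2)) ∧
      (∀ x1 y1, c.w1 x1 y1 - c'.w1 x1 y1
        = ρ.r01 x1 (f1 y1) + ρ.r10 y1 (f0 x1) - f1 (a.m1 x1 y1)) ∧
      (∀ y1 y2, c.w2 y1 y2 - c'.w2 y1 y2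
        = ρ.r11 y1 (f1 y2) - ρ.r11 y2 (f1 y1) - f0 (a.br y1 y2)) := by
  set f0 : A0 →ₗ[k] V0 := (LinearMap.snd k A0 V0) ∘ₗ φ0 ∘ₗ (LinearMap.inl k A0 V0) with hf0
  set f1 : A1 →ₗ[k] V1 := (LinearMap.snd k A1 V1) ∘ₗ φ1 ∘ₗ (LinearMap.inl k A1 V1) with hf1
  have hφ0 : ∀ x u, φ0 (x, u) = (x, f0 x + u) := by
    intro x u
    have : φ0 (x, u) = φ0 (x, 0) + φ0 (0, u) := by rw [← map_add]; congr 1 <;> simp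
    rw [this, hV0]
    ext
    · simpa using hA0 (x, 0)
    · simp [hf0]
  have hφ1 : ∀ y w, φ1 (y, w) = (y, f1 y + w) := by
    intro y w
    have : φ1 (y, w) = φ1 (y, 0) + φ1 (0, w) := by rw [← map_add]; congr 1 <;> simp
    rw [this, hV1]
    ext
    · simpa using hA1 (y, 0)
    · simp [hf1]
  refine ⟨f0, f1, hφ0, hφ1, ?_, ?_, ?_⟩
  · intro x1 x2
    have H := hm0 (x1, 0) (x2, 0)
    simp only [eM0, hφ0, map_zero, add_zero, zero_add] at H
    rw [Prod.mk.injEq] at H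
    obtain ⟨-, H2⟩ := H
    rw [← sub_eq_iff_eq_add] at H2
    rw [← H2]; abel
  · intro x1 y1
    have H := hm1 (x1, 0) (y1, 0)
    simp only [eM1, hφ0, hφ1, map_zero, add_zero, zero_add] at H
    rw [Prod.mk.injEq] at H
    obtain ⟨-, H2⟩ := H
    rw [← sub_eq_iff_eq_add] at H2
    rw [← H2]; abel
  · intro y1 y2
    have H := hbr (y1, 0) (y2, 0)
    simp only [eBr, hφ0, hφ1, map_zero, add_zero, zero_add, sub_zero] at H
    rw [Prod.mk.injEq] at H
    obtain ⟨-, H2⟩ := H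
    rw [← sub_eq_iff_eq_add] at H2
    rw [← H2]; abel
end

section
/- Let (𝔞, α, β) be a multiplicative Hom-Lie antialgebra over a field k of characteristic 0 with a representation ρ = (ρ₀⁰, ρ₀¹, ρ₁⁰, ρ₁¹) on (V₀, V₁, α_V, β_V), and let ω and ω' be two 2-cocycles. Suppose there exist linear maps f₀ : 𝔞₀ → V₀, f₁ : 𝔞₁ → V₁ with α_V ∘ f₀ = f₀ ∘ α, β_V ∘ f₁ = f₁ ∘ β, such that (ω₀ − ω₀')(x₁,x₂) = ρ₀⁰(x₁)f₀(x₂) + ρ₀⁰(x₂)f₀(x₁) − f₀(x₁·x₂), (ω₁ − ω₁')(x₁,y₁) = ρ₀¹(x₁)f₁(y₁) + ρ₁⁰(y₁)f₀(x₁) − f₁(x₁·y₁), (ω₂ − ω₂')(y₁,y₂) = ρ₁¹(y₁)f₁(y₂) − ρ₁¹(y₂)f₁(y₁) − f₀([y₁,y₂]). Then the maps φ₀(x,u) = (x, f₀(x) + u), φ₁(y,w) = (y, f₁(y) + w) form a Hom-Lie antialgebra homomorphism from 𝔞 ⊕_ω V to 𝔞 ⊕_{ω'} V restricting to the identity on V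 and inducing the identity on 𝔞; hence the two extensions are equivalent. -/
variable {k : Type*} [Field k] [CharZero k]
variable {A0 A1 : Type*}
  [AddCommGroup A0] [Module k A0] [AddCommGroup A1] [Module k A1]

variable {V0 V1 : Type*} [AddCommGroup V0] [Module k V0] [AddCommGroup V1] [Module k V1]

/-- The shift map `(x, u) ↦ (x, f₀(x) + u)` on the even part. -/
def shift0 (f0 : A0 →ₗ[k] V0) : A0 × V0 → A0 × V0 := fun p => (p.1, f0 p.1 + p.2)

/-- The shift map `(y, w) ↦ (y, f₁(y) + w)` on the odd part. -/
def shift1 (f1 : A1 →ₗ[k] V1) : A1 × V1 → A1 × V1 := fun q => (q.1, f1 q.1 + q.2)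

/-- if the difference of two 2-cocycles `ω`, `ω'` is the coboundary of a
structure-map-compatible pair `(f₀, f₁)`, then `φ₀(x,u) = (x, f₀(x)+u)`,
`φ₁(y,w) = (y, f₁(y)+w)` is a homomorphism of Hom-Lie antialgebras from `𝔞 ⊕_ω V` to
`𝔞 ⊕_ω' V` restricting to the identity on `V` and inducing the identity on `𝔞`;
hence the two extensions are equivalent. -/
theorem cohomologous_gives_equivalent_extensions
    (a : MHLA k A0 A1) (ρ : HLARep a V0 V1) (c c' : Cocycle2 a ρ)
    (f0 : A0 →ₗ[k] V0) (f1 : A1 →ₗ[k] V1)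
    (hf0 : ∀ x, ρ.aV (f0 x) = f0 (a.al x))
    (hf1 : ∀ y, ρ.bV (f1 y) = f1 (a.be y))
    (hw0 : ∀ x1 x2, c.w0 x1 x2 - c'.w0 x1 x2
      = ρ.r00 x1 (f0 x2) + ρ.r00 x2 (f0 x1) - f0 (a.m0 x1 x2))
    (hw1 : ∀ x1 y1, c.w1 x1 y1 - c'.w1 x1 y1
      = ρ.r01 x1 (f1 y1) + ρ.r10 y1 (f0 x1) - f1 (a.m1 x1 y1))
    (hw2 : ∀ y1 y2, c.w2 y1 y2 - c'.w2 y1 y2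
      = ρ.r11 y1 (f1 y2) - ρ.r11 y2 (f1 y1) - f0 (a.br y1 y2)) :
    -- φ restricts to the identity on V and induces the identity on 𝔞
    (∀ u : V0, shift0 f0 (0, u) = ((0 : A0), u)) ∧
    (∀ w : V1, shift1 f1 (0, w) = ((0 : A1), w)) ∧
    (∀ p : A0 × V0, (shift0 f0 p).1 = p.1) ∧
    (∀ q : A1 × V1, (shift1 f1 q).1 = q.1) ∧
    -- φ commutes with the structure maps
    (∀ p, shift0 f0 (eAl a ρ p) = eAl a ρ (shift0 f0 p)) ∧
    (∀ q, shift1 f1 (eBe a ρ q) = eBe a ρ (shift1 f1 q)) ∧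
    -- φ is a homomorphism from 𝔞 ⊕_ω V to 𝔞 ⊕_ω' V
    (∀ p q, shift0 f0 (eM0 a ρ c p q) = eM0 a ρ c' (shift0 f0 p) (shift0 f0 q)) ∧
    (∀ p s, shift1 f1 (eM1 a ρ c p s) = eM1 a ρ c' (shift0 f0 p) (shift1 f1 s)) ∧
    (∀ s t, shift0 f0 (eBr a ρ c s t) = eBr a ρ c' (shift1 f1 s) (shift1 f1 t)) := by
  refine ⟨?_, ?_, ?_, ?_, ?_, ?_, ?_, ?_, ?_⟩
  · intro u; simp [shift0]
  · intro w; simp [shift1]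
  · intro p; rfl
  · intro q; rfl
  · intro p; simp [shift0, eAl, hf0]
  · intro q; simp [shift1, eBe, hf1]
  · intro p q
    simp only [shift0, eM0, Prod.mk.injEq, true_and]
    have h := hw0 p.1 q.1
    simp only [map_add]
    linear_combination (norm := abel) h
  · intro p s
    simp only [shift0, shift1, eM1, Prod.mk.injEq, true_and]
    have h := hw1 p.1 s.1
    simp only [map_add]
    linear_combination (norm := abel) h
  · intro s t
    simp only [shift0, shift1, eBr, Prod.mk.injEq, true_and]
    have h := hw2 s.1 t.1
    simp only [map_add, map_sub]
    linear_combination (norm := abel) h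
end
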